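/- arXiv:2002.03677 — 6 statements merged into one kernel-verified Lean document; each statement's English description precedes it below -/
import Mathlib

section
/- Let a₁ ≥ a₂ ≥ ⋯ ≥ a_p be real numbers and t ≥ ∑_{i=1}^p a_i. Over the region A = {(x₁,…,x_p) ∈ ℝ^p : ∑ x_i = t and x_i ≥ a_i for all i}, the maximum of ∑ x_i² is attained at x₁ = t − ∑_{i=2}^p a_i, x₂ = a₂, …, x_p = a_p; hence the maximum value equals (t − ∑_{i=2}^p a_i)² + ∑_{i=2}^p a_i². -/
theorem max_sum_sq_on_region (p : ℕ) (hp : 0 < p) (a : Fin p → ℝ) (t : ℝ)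
    (hmono : ∀ i j : Fin p, i ≤ j → a j ≤ a i)
    (ht : ∑ i, a i ≤ t) :
    ((∑ i, (if i = (⟨0, hp⟩ : Fin p) then t - ∑ j ∈ Finset.univ.erase (⟨0, hp⟩ : Fin p), a j
        else a i)) = t ∧
      (∀ i : Fin p, a i ≤ (if i = (⟨0, hp⟩ : Fin p) then
        t - ∑ j ∈ Finset.univ.erase (⟨0, hp⟩ : Fin p), a j else a i)) ∧
      (∑ i, (if i = (⟨0, hp⟩ : Fin p) then
          t - ∑ j ∈ Finset.univ.erase (⟨0, hp⟩ : Fin p), a j else a i) ^ 2) =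
        (t - ∑ j ∈ Finset.univ.erase (⟨0, hp⟩ : Fin p), a j) ^ 2 +
          ∑ j ∈ Finset.univ.erase (⟨0, hp⟩ : Fin p), (a j) ^ 2) ∧
    IsGreatest {y : ℝ | ∃ x : Fin p → ℝ, (∑ i, x i = t) ∧ (∀ i, a i ≤ x i) ∧
        y = ∑ i, (x i) ^ 2}
      ((t - ∑ j ∈ Finset.univ.erase (⟨0, hp⟩ : Fin p), a j) ^ 2 +
        ∑ j ∈ Finset.univ.erase (⟨0, hp⟩ : Fin p), (a j) ^ 2) := by
  set z : Fin p := ⟨0, hp⟩ with hz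
  have hsplit : ∀ f : Fin p → ℝ,
      ∑ i, f i = f z + ∑ j ∈ Finset.univ.erase z, f j := fun f =>
    (Finset.add_sum_erase _ f (Finset.mem_univ z)).symm
  set S : ℝ := ∑ j ∈ Finset.univ.erase z, a j with hS
  have hT : ∑ i, a i = a z + S := hsplit a
  have haz : a z ≤ t - S := by linarith
  have h1 : (∑ i, (if i = z then t - S else a i)) = t := by
    rw [hsplit (fun i => if i = z then t - S else a i)]
    rw [if_pos rfl, Finset.sum_congr rfl fun j hj => if_neg (Finset.ne_of_mem_erase hj)]
    ring
  have h2 : ∀ i : Fin p, a i ≤ (if i = z then t - S else a i) := by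
    intro i
    by_cases h : i = z
    · rw [if_pos h, h]; exact haz
    · rw [if_neg h]
  have h3 : (∑ i, (if i = z then t - S else a i) ^ 2) =
      (t - S) ^ 2 + ∑ j ∈ Finset.univ.erase z, (a j) ^ 2 := by
    rw [hsplit (fun i => (if i = z then t - S else a i) ^ 2)]
    rw [if_pos rfl, Finset.sum_congr rfl fun j hj => by rw [if_neg (Finset.ne_of_mem_erase hj)]]
  refine ⟨⟨h1, h2, h3⟩, ⟨⟨fun i => if i = z then t - S else a i, h1, h2, h3.symm⟩, ?_⟩⟩
  rintro y ⟨x, hxsum, hxge, rfl⟩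
  set d : Fin p → ℝ := fun i => x i - a i with hd
  have hdnn : ∀ i ∈ Finset.univ, (0:ℝ) ≤ d i := fun i _ => by
    have := hxge i; simp [hd]; linarith
  have hDsum : ∑ i, d i = t - ∑ i, a i := by
    simp only [hd, Finset.sum_sub_distrib, hxsum]
  have key1 : ∑ i, a i * d i ≤ a z * ∑ i, d i := by
    rw [Finset.mul_sum]
    refine Finset.sum_le_sum fun i hi => ?_
    exact mul_le_mul_of_nonneg_right (hmono z i (Fin.mk_le_of_le_val (Nat.zero_le _)))
      (hdnn i hi)
  have key2 : ∑ i, d i ^ 2 ≤ (∑ i, d i) ^ 2 :=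
    Finset.sum_sq_le_sq_sum_of_nonneg hdnn
  have expand : ∑ i, x i ^ 2 =
      ∑ i, a i ^ 2 + 2 * ∑ i, a i * d i + ∑ i, d i ^ 2 := by
    rw [Finset.mul_sum, ← Finset.sum_add_distrib, ← Finset.sum_add_distrib]
    exact Finset.sum_congr rfl fun i _ => by simp only [hd]; ring
  have hsq : ∑ i, a i ^ 2 = a z ^ 2 + ∑ j ∈ Finset.univ.erase z, a j ^ 2 :=
    hsplit fun i => a i ^ 2
  have hD : ∑ i, d i = t - (a z + S) := by rw [hDsum, hT]
  have hts : t - S = a z + ∑ i, d i := by linarith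
  rw [hts]
  nlinarith [key1, key2, expand, hsq]
end

section
/- For any point (x₁,…,x_p) with ∑ x_i = t and x_i ≥ a_i for all i, where a₁ ≥ ⋯ ≥ a_p and t ≥ ∑ a_i, we have ∑_{i=1}^p x_i² ≤ (t − ∑_{i=2}^p a_i)² + ∑_{i=2}^p a_i². -/
theorem sum_sq_le_bound (p : ℕ) (hp : 0 < p) (a x : Fin p → ℝ) (t : ℝ)
    (hmono : ∀ i j : Fin p, i ≤ j → a j ≤ a i)
    (ht : ∑ i, a i ≤ t)
    (hsum : ∑ i, x i = t)
    (hx : ∀ i, a i ≤ x i) :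
    ∑ i, (x i) ^ 2 ≤
      (t - ∑ j ∈ Finset.univ.erase (⟨0, hp⟩ : Fin p), a j) ^ 2 +
        ∑ j ∈ Finset.univ.erase (⟨0, hp⟩ : Fin p), (a j) ^ 2 := by
  set z : Fin p := ⟨0, hp⟩ with hzdef
  set s := Finset.univ.erase z with hs
  have hz : ∀ i : Fin p, z ≤ i := fun i => Fin.le_def.mpr (Nat.zero_le _)
  have haz : ∀ i, a i ≤ a z := fun i => hmono z i (hz i)
  have hS : ∑ j ∈ s, a j = (∑ i, a i) - a z :=
    Finset.sum_erase_eq_sub (Finset.mem_univ z)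
  have hxM : ∀ i, x i ≤ t - ∑ j ∈ s, a j := by
    intro i
    have h1 : ∑ j ∈ Finset.univ.erase i, x j = (∑ i, x i) - x i :=
      Finset.sum_erase_eq_sub (Finset.mem_univ i)
    have h2 : ∑ j ∈ Finset.univ.erase i, a j ≤ ∑ j ∈ Finset.univ.erase i, x j :=
      Finset.sum_le_sum fun j _ => hx j
    have h3 : ∑ j ∈ Finset.univ.erase i, a j = (∑ i, a i) - a i :=
      Finset.sum_erase_eq_sub (Finset.mem_univ i)
    have := haz i
    rw [hsum] at h1
    rw [hS]
    linarith
  set M := t - ∑ j ∈ s, a j with hM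
  have hMx : M - x z = ∑ j ∈ s, (x j - a j) := by
    rw [Finset.sum_sub_distrib]
    have h4 : ∑ j ∈ s, x j = (∑ i, x i) - x z :=
      Finset.sum_erase_eq_sub (Finset.mem_univ z)
    rw [hsum] at h4
    rw [h4]; linarith [hS]
  have key : ∑ j ∈ s, (x j ^ 2 - a j ^ 2) ≤ ∑ j ∈ s, (x j - a j) * (M + x z) := by
    apply Finset.sum_le_sum
    intro j _
    have h1 : 0 ≤ x j - a j := by linarith [hx j]
    have h2 : x j + a j ≤ M + x z := by
      have := hxM j; have := haz j; have := hx z; linarith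
    calc x j ^ 2 - a j ^ 2 = (x j - a j) * (x j + a j) := by ring
      _ ≤ (x j - a j) * (M + x z) := mul_le_mul_of_nonneg_left h2 h1
  have key2 : ∑ j ∈ s, (x j - a j) * (M + x z) = (M - x z) * (M + x z) := by
    rw [← Finset.sum_mul, ← hMx]
  have split : ∑ i, x i ^ 2 = x z ^ 2 + ∑ j ∈ s, x j ^ 2 :=
    (Finset.add_sum_erase _ _ (Finset.mem_univ z)).symm
  have hfin : ∑ j ∈ s, x j ^ 2 - ∑ j ∈ s, a j ^ 2 ≤ M ^ 2 - x z ^ 2 := by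
    rw [← Finset.sum_sub_distrib]
    calc ∑ j ∈ s, (x j ^ 2 - a j ^ 2) ≤ (M - x z) * (M + x z) := key.trans_eq key2
      _ = M ^ 2 - x z ^ 2 := by ring
  linarith
end

section
/- Fix b, c, d ≥ 0 with b + c > 0. Then the function a ↦ N(b+c)/[(a+b)(b+d) + (a+c)(c+d)], where N = a+b+c+d, is (weakly) decreasing in a ≥ 0. -/
theorem ARD_antitone_in_a (b c d : ℝ) (hb : 0 ≤ b) (hc : 0 ≤ c) (hd : 0 ≤ d)
    (hbc : 0 < b + c) (a₁ a₂ : ℝ) (ha₁ : 0 ≤ a₁) (h12 : a₁ ≤ a₂) :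
    (a₂ + b + c + d) * (b + c) / ((a₂ + b) * (b + d) + (a₂ + c) * (c + d)) ≤
      (a₁ + b + c + d) * (b + c) / ((a₁ + b) * (b + d) + (a₁ + c) * (c + d)) := by
  have ha₂ : 0 ≤ a₂ := ha₁.trans h12
  have hbc2 : 0 < b ^ 2 + c ^ 2 := by nlinarith [sq_nonneg (b - c), mul_pos hbc hbc]
  have hD1 : 0 < (a₁ + b) * (b + d) + (a₁ + c) * (c + d) := by nlinarith
  have hD2 : 0 < (a₂ + b) * (b + d) + (a₂ + c) * (c + d) := by nlinarith
  rw [div_le_div_iff₀ hD2 hD1]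
  nlinarith [mul_nonneg (sub_nonneg.2 h12) hd, mul_nonneg (mul_nonneg (sub_nonneg.2 h12) hd) hd,
    mul_nonneg (sub_nonneg.2 h12) hbc.le, sq_nonneg (b - c), sq_nonneg (b + c),
    mul_nonneg (mul_nonneg (sub_nonneg.2 h12) hd) hbc.le,
    mul_nonneg (mul_nonneg (sub_nonneg.2 h12) hb) hc]
end

section
/- Let N be an r × s contingency table with nonnegative integer entries, all row sums n_{i+} ≥ 1 and all column sums n_{+j} ≥ 1, total n, and d = (∑ n_{ij}² + n² − ∑_i n_{i+}² − ∑_j n_{+j}²)/2. Then d = 0 if and only if min{r, s} = 1. -/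
open Finset

lemma key_id {r s : ℕ} (a : Fin r → Fin s → ℚ) :
    (∑ i, ∑ i', ∑ j, ∑ j', (if i ≠ i' ∧ j ≠ j' then a i j * a i' j' else 0))
      = (∑ i, ∑ j, a i j ^ 2) + (∑ i, ∑ j, a i j) ^ 2 -
        (∑ i, (∑ j, a i j) ^ 2) - (∑ j, (∑ i, a i j) ^ 2) := by
  have hsplit : ∀ (i i' : Fin r) (j j' : Fin s),
      (if i ≠ i' ∧ j ≠ j' then a i j * a i' j' else 0)
        = a i j * a i' j' - (if i = i' then a i j * a i' j' else 0)
          - (if j = j' then a i j * a i' j' else 0)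
          + (if i = i' ∧ j = j' then a i j * a i' j' else 0) := by
    intro i i' j j'
    by_cases hi : i = i' <;> by_cases hj : j = j' <;> simp [hi, hj]
  simp only [hsplit, Finset.sum_add_distrib, Finset.sum_sub_distrib]
  have h1 : (∑ i, ∑ i', ∑ j, ∑ j', a i j * a i' j') = (∑ i, ∑ j, a i j) ^ 2 := by
    rw [sq, Finset.sum_mul_sum]
    refine Finset.sum_congr rfl fun i _ => Finset.sum_congr rfl fun i' _ => ?_
    rw [Finset.sum_mul_sum]
  have h2 : (∑ i, ∑ i', ∑ j, ∑ j', (if i = i' then a i j * a i' j' else 0))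
      = ∑ i, (∑ j, a i j) ^ 2 := by
    refine Finset.sum_congr rfl fun i _ => ?_
    have : ∀ i' : Fin r, (∑ j, ∑ j', (if i = i' then a i j * a i' j' else 0))
        = if i = i' then ∑ j, ∑ j', a i j * a i' j' else 0 := by
      intro i'; by_cases h : i = i' <;> simp [h]
    rw [Finset.sum_congr rfl fun i' _ => this i', Finset.sum_ite_eq, if_pos (Finset.mem_univ i),
      sq, Finset.sum_mul_sum]
  have h3 : (∑ i, ∑ i', ∑ j, ∑ j', (if j = j' then a i j * a i' j' else 0))
      = ∑ j, (∑ i, a i j) ^ 2 := by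
    have : ∀ (i i' : Fin r), (∑ j, ∑ j', (if j = j' then a i j * a i' j' else 0))
        = ∑ j, a i j * a i' j := by
      intro i i'
      refine Finset.sum_congr rfl fun j _ => ?_
      rw [Finset.sum_ite_eq, if_pos (Finset.mem_univ j)]
    simp only [this]
    calc (∑ i, ∑ i', ∑ j, a i j * a i' j)
        = ∑ i, ∑ j, ∑ i', a i j * a i' j :=
          Finset.sum_congr rfl fun i _ => Finset.sum_comm
      _ = ∑ j, ∑ i, ∑ i', a i j * a i' j := Finset.sum_comm
      _ = ∑ j, (∑ i, a i j) ^ 2 := by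
          refine Finset.sum_congr rfl fun j _ => ?_
          rw [sq, Finset.sum_mul_sum]
  have h4 : (∑ i, ∑ i', ∑ j, ∑ j', (if i = i' ∧ j = j' then a i j * a i' j' else 0))
      = ∑ i, ∑ j, a i j ^ 2 := by
    refine Finset.sum_congr rfl fun i _ => ?_
    have : ∀ i' : Fin r, (∑ j, ∑ j', (if i = i' ∧ j = j' then a i j * a i' j' else 0))
        = if i = i' then ∑ j, a i j * a i' j else 0 := by
      intro i'
      by_cases h : i = i' <;> simp [h, ite_and] <;>
        exact Finset.sum_congr rfl fun j _ => by rw [Finset.sum_ite_eq, if_pos (Finset.mem_univ j)]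
    rw [Finset.sum_congr rfl fun i' _ => this i', Finset.sum_ite_eq, if_pos (Finset.mem_univ i)]
    exact Finset.sum_congr rfl fun j _ => (sq _).symm
  rw [h1, h2, h3, h4]; ring


theorem d_eq_zero_iff_min_eq_one (r s : ℕ) (hr : 1 ≤ r) (hs : 1 ≤ s)
    (M : Fin r → Fin s → ℕ)
    (hrow : ∀ i, 1 ≤ ∑ j, M i j) (hcol : ∀ j, 1 ≤ ∑ i, M i j) :
    (((∑ i, ∑ j, (M i j : ℚ) ^ 2) + (∑ i, ∑ j, (M i j : ℚ)) ^ 2 -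
        (∑ i, (∑ j, (M i j : ℚ)) ^ 2) - (∑ j, (∑ i, (M i j : ℚ)) ^ 2)) / 2 = 0) ↔
      min r s = 1 := by
  constructor
  · intro h0
    by_contra hmin
    have hr2 : 2 ≤ r := by omega
    have hs2 : 2 ≤ s := by omega
    rw [div_eq_zero_iff] at h0
    have hS : (∑ i, ∑ i', ∑ j, ∑ j',
        (if i ≠ i' ∧ j ≠ j' then (M i j : ℚ) * M i' j' else 0)) = 0 := by
      rw [key_id]
      simpa using h0
    -- term-level nonnegativity
    have hnn : ∀ (i i' : Fin r) (j j' : Fin s),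
        0 ≤ (if i ≠ i' ∧ j ≠ j' then (M i j : ℚ) * M i' j' else 0) := by
      intro i i' j j'; split <;> positivity
    -- any single term is ≤ S
    have hterm : ∀ (i i' : Fin r) (j j' : Fin s),
        (if i ≠ i' ∧ j ≠ j' then (M i j : ℚ) * M i' j' else 0) = 0 := by
      intro i i' j j'
      have h4 := (Finset.sum_eq_zero_iff_of_nonneg
        (fun i _ => Finset.sum_nonneg fun i' _ => Finset.sum_nonneg fun j _ =>
          Finset.sum_nonneg fun j' _ => hnn i i' j j')).mp hS i (Finset.mem_univ i)
      have h3 := (Finset.sum_eq_zero_iff_of_nonneg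
        (fun i' _ => Finset.sum_nonneg fun j _ =>
          Finset.sum_nonneg fun j' _ => hnn i i' j j')).mp h4 i' (Finset.mem_univ i')
      have h2 := (Finset.sum_eq_zero_iff_of_nonneg
        (fun j _ => Finset.sum_nonneg fun j' _ => hnn i i' j j')).mp h3 j (Finset.mem_univ j)
      exact (Finset.sum_eq_zero_iff_of_nonneg
        (fun j' _ => hnn i i' j j')).mp h2 j' (Finset.mem_univ j')
    have hprod : ∀ (i i' : Fin r) (j j' : Fin s), i ≠ i' → j ≠ j' → M i j = 0 ∨ M i' j' = 0 := by
      intro i i' j j' hi hj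
      have := hterm i i' j j'
      rw [if_pos ⟨hi, hj⟩, mul_eq_zero] at this
      rcases this with h | h
      · left; exact_mod_cast h
      · right; exact_mod_cast h
    -- find witnesses
    have hex : ∀ i : Fin r, ∃ j, M i j ≠ 0 := by
      intro i
      have h := hrow i
      by_contra hc
      push_neg at hc
      simp only [hc, Finset.sum_const_zero] at h
      omega
    have hexc : ∀ j : Fin s, ∃ i, M i j ≠ 0 := by
      intro j
      have h := hcol j
      by_contra hc
      push_neg at hc
      simp only [hc, Finset.sum_const_zero] at h
      omega
    set i0 : Fin r := ⟨0, by omega⟩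
    set i1 : Fin r := ⟨1, by omega⟩
    have hi01 : i0 ≠ i1 := by simp [i0, i1, Fin.ext_iff]
    obtain ⟨j0, hj0⟩ := hex i0
    obtain ⟨j1, hj1⟩ := hex i1
    by_cases hjj : j0 = j1
    · -- same column: use another column
      subst hjj
      set j2 : Fin s := if h : (j0 : ℕ) = 0 then ⟨1, by omega⟩ else ⟨0, by omega⟩ with hj2def
      have hj02 : j0 ≠ j2 := by
        rw [hj2def]
        split
        · next h => simp only [ne_eq, Fin.ext_iff]; omega
        · next h => simp only [ne_eq, Fin.ext_iff]; omega
      obtain ⟨i2, hi2⟩ := hexc j2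
      by_cases hii : i2 = i0
      · rcases hprod i1 i2 j0 j2 (by rw [hii]; exact hi01.symm) hj02 with h | h
        · exact hj1 h
        · exact hi2 h
      · rcases hprod i0 i2 j0 j2 (fun h => hii h.symm) hj02 with h | h
        · exact hj0 h
        · exact hi2 h
    · rcases hprod i0 i1 j0 j1 hi01 hjj with h | h
      · exact hj0 h
      · exact hj1 h
  · intro hmin
    have h1 : r = 1 ∨ s = 1 := by omega
    rcases h1 with h | h
    · subst h
      simp only [Fin.sum_univ_one]
      ring
    · subst h
      simp only [Fin.sum_univ_one]
      ring
end

section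
/- For integers r, s ≥ 2, with N = C(r+s−1, 2), a = 0, b = C(s,2), c = C(r,2), d = (r−1)(s−1), the ARI value equals [1 − (1/2)·C(r+s−1,2)·(C(r,2)^{-1} + C(s,2)^{-1})]^{-1}, and this value is negative. -/
lemma min_ARI_key (x y : ℚ) (hx : 2 ≤ x) (hy : 2 ≤ y) :
    let B := y * (y - 1) / 2
    let C := x * (x - 1) / 2
    let d := (x - 1) * (y - 1)
    let N := (x + y - 1) * (x + y - 2) / 2
    ((N * (0 + d) - ((0 + B) * (0 + C) + (C + d) * (B + d))) /
        (N ^ 2 - ((0 + B) * (0 + C) + (C + d) * (B + d))) =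
      (1 - (1 / 2) * N * (C⁻¹ + B⁻¹))⁻¹) ∧
    (1 - (1 / 2) * N * (C⁻¹ + B⁻¹))⁻¹ < 0 := by
  intro B C d N
  have hB : 0 < B := by
    have h : 0 < y * (y - 1) := by nlinarith
    show 0 < y * (y - 1) / 2
    positivity
  have hC : 0 < C := by
    have h : 0 < x * (x - 1) := by nlinarith
    show 0 < x * (x - 1) / 2
    positivity
  have hd : 0 < d := by
    show 0 < (x - 1) * (y - 1)
    nlinarith
  have hNeq : N = B + C + d := by simp only [B, C, d, N]; ring
  have hden : N ^ 2 - ((0 + B) * (0 + C) + (C + d) * (B + d)) =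
      B ^ 2 + C ^ 2 + d * (B + C) := by rw [hNeq]; ring
  have hdenpos : 0 < B ^ 2 + C ^ 2 + d * (B + C) := by
    have := mul_pos hd (add_pos hB hC)
    nlinarith
  have hnum : N * (0 + d) - ((0 + B) * (0 + C) + (C + d) * (B + d)) = -(2 * B * C) := by
    rw [hNeq]; ring
  have hinv : 1 - (1 / 2) * N * (C⁻¹ + B⁻¹) =
      -(B ^ 2 + C ^ 2 + d * (B + C)) / (2 * B * C) := by
    rw [hNeq]; field_simp; ring
  constructor
  · rw [hnum, hden, hinv]
    rw [inv_div, div_neg, neg_div]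
  · rw [hinv, inv_lt_zero]
    apply div_neg_of_neg_of_pos
    · linarith
    · exact mul_pos (mul_pos two_pos hB) hC

theorem min_ARI_value (r s : ℕ) (hr : 2 ≤ r) (hs : 2 ≤ s)
    (a b c d N : ℚ) (ha : a = 0) (hb : b = s.choose 2) (hc : c = r.choose 2)
    (hd : d = ((r : ℚ) - 1) * ((s : ℚ) - 1)) (hN : N = ((r + s - 1).choose 2 : ℕ)) :
    (N * (a + d) - ((a + b) * (a + c) + (c + d) * (b + d))) /
        (N ^ 2 - ((a + b) * (a + c) + (c + d) * (b + d))) =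
      (1 - (1 / 2) * ((r + s - 1).choose 2 : ℚ) *
          (((r.choose 2 : ℚ))⁻¹ + ((s.choose 2 : ℚ))⁻¹))⁻¹ ∧
    (1 - (1 / 2) * ((r + s - 1).choose 2 : ℚ) *
        (((r.choose 2 : ℚ))⁻¹ + ((s.choose 2 : ℚ))⁻¹))⁻¹ < 0 := by
  have hx : (2 : ℚ) ≤ (r : ℚ) := by exact_mod_cast hr
  have hy : (2 : ℚ) ≤ (s : ℚ) := by exact_mod_cast hs
  have h1 : (1 : ℕ) ≤ r + s := by omega
  have hcr : ((r.choose 2 : ℕ) : ℚ) = (r : ℚ) * ((r : ℚ) - 1) / 2 := by rw [Nat.cast_choose_two]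
  have hcs : ((s.choose 2 : ℕ) : ℚ) = (s : ℚ) * ((s : ℚ) - 1) / 2 := by rw [Nat.cast_choose_two]
  have hcN : (((r + s - 1).choose 2 : ℕ) : ℚ) =
      ((r : ℚ) + s - 1) * ((r : ℚ) + s - 2) / 2 := by
    rw [Nat.cast_choose_two]
    push_cast [Nat.cast_sub h1]
    ring
  subst ha hb hc hd hN
  rw [hcr, hcs, hcN]
  simpa using min_ARI_key (r : ℚ) (s : ℚ) hx hy
end

section
/- For all integers r, s ≥ 2, the value m(r,s) = [1 − (1/2)·C(r+s−1,2)·(C(r,2)^{-1} + C(s,2)^{-1})]^{-1} satisfies m(r,s) ≥ −1/2, with equality if and only if r = s = 2. -/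
set_option maxHeartbeats 1000000

theorem min_ARI_global_bound (r s : ℕ) (hr : 2 ≤ r) (hs : 2 ≤ s) :
    -(1 / 2 : ℚ) ≤ (1 - (1 / 2) * (((r + s - 1).choose 2 : ℕ) : ℚ) *
        (((r.choose 2 : ℕ) : ℚ)⁻¹ + ((s.choose 2 : ℕ) : ℚ)⁻¹))⁻¹ ∧
    ((1 - (1 / 2) * (((r + s - 1).choose 2 : ℕ) : ℚ) *
        (((r.choose 2 : ℕ) : ℚ)⁻¹ + ((s.choose 2 : ℕ) : ℚ)⁻¹))⁻¹ = -(1 / 2 : ℚ) ↔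
      r = 2 ∧ s = 2) := by
  have hx : (2:ℚ) ≤ (r:ℚ) := by exact_mod_cast hr
  have hy : (2:ℚ) ≤ (s:ℚ) := by exact_mod_cast hs
  have ha : ((r.choose 2 : ℕ) : ℚ) = (r:ℚ) * ((r:ℚ) - 1) / 2 := by
    rw [Nat.cast_choose_two]
  have hb : ((s.choose 2 : ℕ) : ℚ) = (s:ℚ) * ((s:ℚ) - 1) / 2 := by
    rw [Nat.cast_choose_two]
  have h1 : (1:ℕ) ≤ r + s := by omega
  have hc : (((r + s - 1).choose 2 : ℕ) : ℚ)
      = ((r:ℚ) + (s:ℚ) - 1) * ((r:ℚ) + (s:ℚ) - 2) / 2 := by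
    rw [Nat.cast_choose_two]
    push_cast [Nat.cast_sub h1]
    ring
  set X : ℚ := (r:ℚ) with hX
  set Y : ℚ := (s:ℚ) with hY
  clear_value X Y
  have hu : (0:ℚ) ≤ X - 2 := by linarith
  have hv : (0:ℚ) ≤ Y - 2 := by linarith
  have hapos : (0:ℚ) < X * (X - 1) / 2 := by nlinarith
  have hbpos : (0:ℚ) < Y * (Y - 1) / 2 := by nlinarith
  have ha0 : X * (X - 1) / 2 ≠ 0 := ne_of_gt hapos
  have hb0 : Y * (Y - 1) / 2 ≠ 0 := ne_of_gt hbpos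
  have hX0 : X ≠ 0 := by linarith
  have hX1 : X - 1 ≠ 0 := by intro h; nlinarith
  have hY0 : Y ≠ 0 := by linarith
  have hY1 : Y - 1 ≠ 0 := by intro h; nlinarith
  -- key polynomial inequality
  have key : ((X + Y - 1) * (X + Y - 2) / 2) * (X * (X - 1) / 2 + Y * (Y - 1) / 2)
      - 6 * (X * (X - 1) / 2) * (Y * (Y - 1) / 2)
      ≥ (X - 2) / 2 + (Y - 2) / 2 := by
    nlinarith [sq_nonneg (X - Y), sq_nonneg (X + Y - 4), mul_nonneg hu hv,
      mul_nonneg (mul_nonneg hu hv) hu, mul_nonneg (mul_nonneg hu hv) hv,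
      mul_nonneg (add_nonneg hu hv) (sq_nonneg (X - Y)),
      mul_nonneg (mul_nonneg hu hv) (sq_nonneg (X - Y)),
      sq_nonneg ((X - 2) ^ 2 - (Y - 2) ^ 2), sq_nonneg (X - 2), sq_nonneg (Y - 2)]
  set E : ℚ := 1 - 1 / 2 * (((r + s - 1).choose 2 : ℕ) : ℚ) *
      (((r.choose 2 : ℕ) : ℚ)⁻¹ + ((s.choose 2 : ℕ) : ℚ)⁻¹) with hEdef
  clear_value E
  have hE2 : E + 2 = -(((X + Y - 1) * (X + Y - 2) / 2) * (X * (X - 1) / 2 + Y * (Y - 1) / 2)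
      - 6 * (X * (X - 1) / 2) * (Y * (Y - 1) / 2)) / (2 * (X * (X - 1) / 2) * (Y * (Y - 1) / 2)) := by
    rw [hEdef, ha, hb, hc]
    field_simp
    ring
  have habpos : (0:ℚ) < 2 * (X * (X - 1) / 2) * (Y * (Y - 1) / 2) := mul_pos (mul_pos two_pos hapos) hbpos
  have hEle : E + 2 ≤ 0 := by
    rw [hE2]
    apply div_nonpos_of_nonpos_of_nonneg
    · linarith
    · linarith
  have hEneg : E < 0 := by linarith
  have hEne : E ≠ 0 := ne_of_lt hEneg
  constructor
  · have h2 : E⁻¹ + 1 / 2 = (2 + E) / (2 * E) := by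
      rw [eq_div_iff (mul_ne_zero two_ne_zero hEne)]
      field_simp
    have h3 : (0:ℚ) ≤ (2 + E) / (2 * E) :=
      div_nonneg_iff.mpr (Or.inr ⟨by linarith, by linarith⟩)
    linarith
  · constructor
    · intro h
      have hEeq : E = -2 := by
        have : E = (E⁻¹)⁻¹ := (inv_inv E).symm
        rw [this, h]
        norm_num
      have hnum : ((X + Y - 1) * (X + Y - 2) / 2) * (X * (X - 1) / 2 + Y * (Y - 1) / 2)
          - 6 * (X * (X - 1) / 2) * (Y * (Y - 1) / 2) = 0 := by
        have h0 : E + 2 = 0 := by rw [hEeq]; ring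
        rw [hE2] at h0
        have := (div_eq_zero_iff.mp h0).resolve_right (ne_of_gt habpos)
        linarith
      have hX2 : X = 2 := by linarith [key, hnum]
      have hY2 : Y = 2 := by linarith [key, hnum]
      rw [hX] at hX2
      rw [hY] at hY2
      exact ⟨by exact_mod_cast hX2, by exact_mod_cast hY2⟩
    · rintro ⟨rfl, rfl⟩
      rw [hEdef]
      norm_num [Nat.choose]
end
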